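/- Let X be a finite abstract simplicial complex on a linearly ordered vertex set and let ≺ be any linear ordering of the maximal faces of X. Then M_0(X) ≤ d(X, ≺). -/

import Mathlib

/-- A hypergraph: a finite vertex set `V` together with a finite family `E` of
subsets of `V` (the edges). -/
structure NatHypergraph where
  V : Finset ℕ
  E : Finset (Finset ℕ)
  edge_subset : ∀ e ∈ E, e ⊆ V

namespace NatHypergraph

/-- The set of neighbours of `v`: all vertices `w` such that some edge contains
both `v` and `w`. -/
def nbhd (H : NatHypergraph) (v : ℕ) : Finset ℕ :=
  H.V.filter fun w => ∃ e ∈ H.E, v ∈ e ∧ w ∈ e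

/-- `N(S) = ⋃ v ∈ S, N(v)`. -/
def nbhdSet (H : NatHypergraph) (S : Finset ℕ) : Finset ℕ :=
  S.biUnion H.nbhd

/-- `H` has no isolated vertex: every vertex has a neighbour. -/
def NoIsolatedVertex (H : NatHypergraph) : Prop :=
  ∀ v ∈ H.V, (H.nbhd v).Nonempty

/-- `B` is a cover of `H` if it meets every edge. -/
def IsCover (H : NatHypergraph) (B : Finset ℕ) : Prop :=
  B ⊆ H.V ∧ ∀ e ∈ H.E, (e ∩ B).Nonempty

instance (H : NatHypergraph) (B : Finset ℕ) : Decidable (H.IsCover B) :=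
  inferInstanceAs (Decidable (_ ∧ _))

/-- `A` is independent if it contains no edge. -/
def IsIndependent (H : NatHypergraph) (A : Finset ℕ) : Prop :=
  A ⊆ H.V ∧ ∀ e ∈ H.E, ¬ e ⊆ A

/-- `W ⊆ V ∖ A` is a dominating set of `A` if `A ⊆ N(W)`. -/
def IsDominatingSet (H : NatHypergraph) (A W : Finset ℕ) : Prop :=
  W ⊆ H.V \ A ∧ A ⊆ H.nbhdSet W

/-- The domination number `γ_A(H)` of a set `A`: the minimum size of a
dominating set of `A`. -/
noncomputable def domNumber (H : NatHypergraph) (A : Finset ℕ) : ℕ :=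
  sInf {n | ∃ W, H.IsDominatingSet A W ∧ W.card = n}

/-- The independence domination number
`γ_i(H) = max {γ_I(H) : I independent}`. -/
noncomputable def indepDomNumber (H : NatHypergraph) : ℕ :=
  sSup {n | ∃ I, H.IsIndependent I ∧ H.domNumber I = n}

end NatHypergraph
/-- A finite abstract simplicial complex on vertex set `ℕ`: a finite family of
finite sets (faces) closed under taking subsets. -/
structure SComplex where
  faces : Finset (Finset ℕ)
  down_closed : ∀ ⦃σ⦄, σ ∈ faces → ∀ ⦃τ⦄, τ ⊆ σ → τ ∈ faces

namespace SComplex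

/-- The vertex set of a simplicial complex. -/
def vertices (X : SComplex) : Finset ℕ := X.faces.sup id

/-- `σ` is a maximal face (facet) of `X`. -/
def IsMaximalFace (X : SComplex) (σ : Finset ℕ) : Prop :=
  σ ∈ X.faces ∧ ∀ τ ∈ X.faces, σ ⊆ τ → τ = σ

/-- `(γ, σ)` is a free pair: `σ` is the unique maximal face containing `γ`. -/
def IsFreePair (X : SComplex) (γ σ : Finset ℕ) : Prop :=
  γ ∈ X.faces ∧ X.IsMaximalFace σ ∧ γ ⊆ σ ∧
    ∀ τ, X.IsMaximalFace τ → γ ⊆ τ → τ = σ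

/-- The empty complex. -/
def empty : SComplex := ⟨∅, by intro σ h; simp at h⟩

/-- An elementary `d`-collapse from `X` to `Y`: there is a free pair `(γ, σ)`
with `|γ| ≤ d`, and `Y` is obtained from `X` by removing all faces `τ` with
`γ ⊆ τ ⊆ σ`. -/
def ElemCollapse (d : ℕ) (X Y : SComplex) : Prop :=
  ∃ γ σ, X.IsFreePair γ σ ∧ γ.card ≤ d ∧
    Y.faces = X.faces.filter fun τ => ¬ (γ ⊆ τ ∧ τ ⊆ σ)

/-- `X` is `d`-collapsible: some finite sequence of elementary `d`-collapses
reduces `X` to the empty complex. -/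
def Collapsible (d : ℕ) (X : SComplex) : Prop :=
  Relation.ReflTransGen (ElemCollapse d) X SComplex.empty

/-- The collapsibility number `C(X)`: the least `d` such that `X` is
`d`-collapsible. -/
noncomputable def collapsibility (X : SComplex) : ℕ :=
  sInf {d | X.Collapsible d}

/-- The link of a face `σ`. -/
def link (X : SComplex) (σ : Finset ℕ) : SComplex where
  faces := X.faces.filter fun τ => σ ∩ τ = ∅ ∧ σ ∪ τ ∈ X.faces
  down_closed := by
    intro τ hτ ρ hρ
    simp only [Finset.mem_filter] at hτ ⊢
    have h1 : σ ∩ ρ ⊆ σ ∩ τ := Finset.inter_subset_inter (le_refl σ) hρ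
    rw [hτ.2.1] at h1
    exact ⟨X.down_closed hτ.1 hρ, Finset.subset_empty.mp h1,
      X.down_closed hτ.2.2 (Finset.union_subset_union (le_refl σ) hρ)⟩

/-- The deletion of a face `σ`. -/
def del (X : SComplex) (σ : Finset ℕ) : SComplex where
  faces := X.faces.filter fun τ => ¬ σ ⊆ τ
  down_closed := by
    intro τ hτ ρ hρ
    simp only [Finset.mem_filter] at hτ ⊢
    exact ⟨X.down_closed hτ.1 hρ, fun hc => hτ.2 (hc.trans hρ)⟩

/-- The induced subcomplex `X[A]` on a set `A` of vertices. -/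
def induced (X : SComplex) (A : Finset ℕ) : SComplex where
  faces := X.faces.filter fun τ => τ ⊆ A
  down_closed := by
    intro τ hτ ρ hρ
    simp only [Finset.mem_filter] at hτ ⊢
    exact ⟨X.down_closed hτ.1 hρ, hρ.trans hτ.2⟩

end SComplex
/-- The non-cover complex `NC(H)` of a hypergraph `H`: its faces are the
subsets of `V(H)` that are not covers of `H`. -/
def nonCoverComplex (H : NatHypergraph) : SComplex where
  faces := H.V.powerset.filter fun A => ¬ H.IsCover A
  down_closed := by
    intro σ hσ τ hτ
    simp only [Finset.mem_filter, Finset.mem_powerset] at hσ ⊢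
    refine ⟨hτ.trans hσ.1, fun hc => hσ.2 ⟨hσ.1, fun e he => ?_⟩⟩
    obtain ⟨x, hx⟩ := hc.2 e he
    rw [Finset.mem_inter] at hx
    exact ⟨x, Finset.mem_inter.mpr ⟨hx.1, hτ hx.2⟩⟩
/-- Auxiliary recursion for the minimal exclusion sequence: `prev` is the set
of entries produced so far, and the list argument is the remaining part of the
ordered list of maximal faces. -/
def mesAux (γ : Finset ℕ) : List (Finset ℕ) → Finset ℕ → List ℕ
  | [], _ => []
  | f :: fs, prev =>
    if hf : γ ⊆ f then []
    else
      let v :=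
        if hp : (prev ∩ (γ \ f)).Nonempty then (prev ∩ (γ \ f)).min' hp
        else (γ \ f).min' (Finset.sdiff_nonempty.mpr hf)
      v :: mesAux γ fs (insert v prev)

/-- The minimal exclusion sequence `mes(γ, ≺)`, where the linear order `≺` on
the maximal faces is given by the list `L = [γ₁, …, γₘ]`. -/
def mes (γ : Finset ℕ) (L : List (Finset ℕ)) : List ℕ := mesAux γ L ∅

/-- `M(γ, ≺)`: the set of vertices appearing in `mes(γ, ≺)`. -/
def mesSet (γ : Finset ℕ) (L : List (Finset ℕ)) : Finset ℕ := (mes γ L).toFinset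

/-- `d(X, ≺) = max_{γ ∈ X} |M(γ, ≺)|`. -/
def dOrder (X : SComplex) (L : List (Finset ℕ)) : ℕ :=
  X.faces.sup fun γ => (mesSet γ L).card

/-- `L` is a linear ordering of the maximal faces of `X`: it enumerates each
maximal face exactly once. -/
def IsFacetOrder (X : SComplex) (L : List (Finset ℕ)) : Prop :=
  L.Nodup ∧ ∀ σ, σ ∈ L ↔ X.IsMaximalFace σ

/-- The list of elements of a finite set of naturals in decreasing order. -/
def descList (A : Finset ℕ) : List ℕ := (A.sort (· ≤ ·)).reverse

/-- `A <_L B`: the lexicographic order on finite sets of naturals, the sets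
being listed in decreasing order of their vertices. -/
def lexLt (A B : Finset ℕ) : Prop :=
  List.Lex (· < ·) (descList A) (descList B)

/-- `L` is the linear order `≺` on the facets of `NC(H)` in which `γ ≺ γ'` iff
the complement of `γ` is lexicographically smaller than the complement of
`γ'`. -/
def IsNCLexFacetOrder (H : NatHypergraph) (L : List (Finset ℕ)) : Prop :=
  IsFacetOrder (nonCoverComplex H) L ∧
    L.Pairwise fun a b => lexLt (H.V \ a) (H.V \ b)
namespace SComplex

instance : DecidableEq SComplex := fun X Y =>
  decidable_of_iff (X.faces = Y.faces) (by cases X; cases Y; simp)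

lemma singleton_mem_faces {X : SComplex} {v : ℕ} (hv : v ∈ X.vertices) :
    ({v} : Finset ℕ) ∈ X.faces := by
  rw [vertices, Finset.mem_sup] at hv
  obtain ⟨σ, hσ, hvσ⟩ := hv
  exact X.down_closed hσ (Finset.singleton_subset_iff.mpr hvσ)

lemma link_faces_card_lt {X : SComplex} {σ : Finset ℕ} (hσ : σ ∈ X.faces)
    (hne : σ.Nonempty) : (X.link σ).faces.card < X.faces.card := by
  refine Finset.card_lt_card
    ((Finset.ssubset_iff_of_subset (Finset.filter_subset _ _)).mpr ⟨σ, hσ, ?_⟩)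
  simp only [Finset.mem_filter, Finset.inter_self]
  intro h
  exact hne.ne_empty h.2.1

lemma del_faces_card_lt {X : SComplex} {σ : Finset ℕ} (hσ : σ ∈ X.faces) :
    (X.del σ).faces.card < X.faces.card := by
  refine Finset.card_lt_card
    ((Finset.ssubset_iff_of_subset (Finset.filter_subset _ _)).mpr ⟨σ, hσ, ?_⟩)
  simp [Finset.mem_filter]

/-- `X^o`: the set of vertices `v` of `X` with `lk(v, X) ≠ del(v, X)`. -/
def coreVertices (X : SComplex) : Finset ℕ :=
  X.vertices.filter fun v => X.link {v} ≠ X.del {v}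

/-- The invariant `M(X)` of Biyikoğlu and Civan: `M(X) = 0` if `X^o = ∅`, and
`M(X) = min_{v ∈ X^o} max {M(lk(v, X)) + 1, M(del(v, X))}` otherwise. -/
noncomputable def Mnum (X : SComplex) : ℕ :=
  if h : (coreVertices X).Nonempty then
    (coreVertices X).attach.inf' (Finset.attach_nonempty_iff.mpr h)
      (fun v => max (Mnum (X.link {v.1}) + 1) (Mnum (X.del {v.1})))
  else 0
termination_by X.faces.card
decreasing_by
  · exact link_faces_card_lt
      (singleton_mem_faces (Finset.mem_of_mem_filter _ v.2))
      (Finset.singleton_nonempty _)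
  · exact del_faces_card_lt
      (singleton_mem_faces (Finset.mem_of_mem_filter _ v.2))

end SComplex

/-!
The proof is an induction on `X` in which the facet order is relaxed to any list `L` of faces
generating `X`. Let `f` be the first member of `L` and `v` the least vertex outside `f`. For a face
`τ` of `lk(v, X)`, the sequence `mes(τ ∪ v)` along `L` begins with `v` and otherwise has the same
entries as `mes(τ)` along the list of members of `L` through `v` with `v` removed, which
generates `lk(v, X)`; so `d(lk(v, X)) + 1 ≤ d(X)`. Removing `v` from every member of `L` does not
change `mes(γ)` for `γ ∌ v`, so `d(del(v, X)) ≤ d(X)`. If `v ∈ X^o`, the recursion for `M` gives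
the bound; otherwise `v` lies in every facet, and then `M(X) ≤ M(lk(v, X))`.
-/

lemma List.toFinset_cons_union {α : Type*} [DecidableEq α] (a : α) (l : List α) (T : Finset α) :
    (a :: l).toFinset ∪ T = l.toFinset ∪ insert a T := by
  rw [List.toFinset_cons, Finset.insert_union, Finset.union_insert]

/-- The entry `v_k` of `mes(γ, ≺)` contributed by the facet `f = γ_k`, where `S` is the set of
the earlier entries `v_1, …, v_{k-1}` (only meaningful when `γ ⊄ f`). -/
def mesNext (γ f S : Finset ℕ) : ℕ :=
  if hp : (S ∩ (γ \ f)).Nonempty then (S ∩ (γ \ f)).min' hp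
  else if h : (γ \ f).Nonempty then (γ \ f).min' h else 0

section MinimalExclusionSequence

variable {γ f S : Finset ℕ} {L : List (Finset ℕ)}

lemma mesNext_mem_sdiff (h : ¬ γ ⊆ f) : mesNext γ f S ∈ γ \ f := by
  unfold mesNext
  split_ifs with hp
  · exact (Finset.mem_inter.mp (Finset.min'_mem _ hp)).2
  · exact Finset.min'_mem _ _
  · exact absurd (Finset.sdiff_nonempty.mpr h) ‹_›

lemma mesNext_mem_of_nonempty (hp : (S ∩ (γ \ f)).Nonempty) : mesNext γ f S ∈ S := by
  rw [mesNext, dif_pos hp]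
  exact (Finset.mem_inter.mp (Finset.min'_mem _ hp)).1

lemma mesNext_empty (h : (γ \ f).Nonempty) : mesNext γ f ∅ = (γ \ f).min' h := by
  simp [mesNext, h]

lemma mesAux_cons_of_subset (h : γ ⊆ f) : mesAux γ (f :: L) S = [] := by
  simp [mesAux, h]

lemma mesAux_cons_of_not_subset (h : ¬ γ ⊆ f) :
    mesAux γ (f :: L) S = mesNext γ f S :: mesAux γ L (insert (mesNext γ f S) S) := by
  simp [mesAux, mesNext, h, Finset.sdiff_nonempty.mpr h]

lemma mem_of_mem_mesAux {x : ℕ} : ∀ {L : List (Finset ℕ)} {S : Finset ℕ},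
    x ∈ mesAux γ L S → x ∈ γ
  | [], _, hx => by simp [mesAux] at hx
  | f :: L, S, hx => by
    by_cases h : γ ⊆ f
    · simp [mesAux_cons_of_subset h] at hx
    · rw [mesAux_cons_of_not_subset h, List.mem_cons] at hx
      rcases hx with rfl | hx
      · exact (Finset.mem_sdiff.mp (mesNext_mem_sdiff h)).1
      · exact mem_of_mem_mesAux hx

lemma mesAux_map_erase {v : ℕ} (hv : v ∉ γ) :
    ∀ (L : List (Finset ℕ)) (S : Finset ℕ), mesAux γ (L.map (·.erase v)) S = mesAux γ L S
  | [], _ => rfl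
  | f :: L, S => by
    have hsd : γ \ f.erase v = γ \ f := by
      ext x
      simp only [Finset.mem_sdiff, Finset.mem_erase]
      grind
    by_cases h : γ ⊆ f
    · rw [List.map_cons, mesAux_cons_of_subset (Finset.subset_erase.mpr ⟨h, hv⟩),
        mesAux_cons_of_subset h]
    · have h' : ¬ γ ⊆ f.erase v := fun h' => h (h'.trans (Finset.erase_subset _ _))
      rw [List.map_cons, mesAux_cons_of_not_subset h, mesAux_cons_of_not_subset h',
        mesAux_map_erase hv L]
      simp only [mesNext, hsd]

lemma mesSet_map_erase {v : ℕ} (hv : v ∉ γ) (L : List (Finset ℕ)) :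
    mesSet γ (L.map (·.erase v)) = mesSet γ L := by
  rw [mesSet, mesSet, mes, mes, mesAux_map_erase hv]

/-- The order on the facets of `lk(v, X)` induced by `L`. -/
def linkList (v : ℕ) (L : List (Finset ℕ)) : List (Finset ℕ) :=
  (L.filter (v ∈ ·)).map (·.erase v)

lemma linkList_cons_of_notMem {v : ℕ} (hv : v ∉ f) : linkList v (f :: L) = linkList v L := by
  simp [linkList, hv]

lemma linkList_cons_of_mem {v : ℕ} (hv : v ∈ f) :
    linkList v (f :: L) = f.erase v :: linkList v L := by
  simp [linkList, hv]

/-- Runs of the sequences of `insert v τ` along `L` and of `τ` along `linkList v L` produce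
the same entries apart from `v` and the entries already recorded in `S`. -/
lemma mesAux_insert_union {v : ℕ} {τ : Finset ℕ} (hv : v ∉ τ) :
    ∀ (L : List (Finset ℕ)) (S : Finset ℕ),
      (mesAux (insert v τ) L (insert v S)).toFinset ∪ insert v S =
        (mesAux τ (linkList v L) S).toFinset ∪ insert v S
  | [], _ => rfl
  | f :: L, S => by
    by_cases hvf : v ∈ f
    · have hsd : insert v τ \ f = τ \ f.erase v := by
        ext x
        simp only [Finset.mem_sdiff, Finset.mem_insert, Finset.mem_erase]
        grind
      have hsub : insert v τ ⊆ f ↔ τ ⊆ f.erase v := by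
        rw [Finset.insert_subset_iff, Finset.subset_erase]
        tauto
      rw [linkList_cons_of_mem hvf]
      by_cases h : τ ⊆ f.erase v
      · rw [mesAux_cons_of_subset (hsub.mpr h), mesAux_cons_of_subset h]
      · have hS : insert v S ∩ (τ \ f.erase v) = S ∩ (τ \ f.erase v) :=
          Finset.insert_inter_of_notMem fun hx => hv (Finset.mem_sdiff.mp hx).1
        have hnext : mesNext (insert v τ) f (insert v S) = mesNext τ (f.erase v) S := by
          simp only [mesNext, hsd, hS]
        rw [mesAux_cons_of_not_subset (mt hsub.mp h), mesAux_cons_of_not_subset h, hnext,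
          List.toFinset_cons_union, List.toFinset_cons_union, Finset.insert_comm _ v S]
        exact mesAux_insert_union hv L _
    · have h : ¬ insert v τ ⊆ f := fun h => hvf (h (Finset.mem_insert_self v τ))
      have hp : (insert v S ∩ (insert v τ \ f)).Nonempty := ⟨v, by simp [hvf]⟩
      rw [linkList_cons_of_notMem hvf, mesAux_cons_of_not_subset h, List.toFinset_cons_union,
        Finset.insert_eq_of_mem (mesNext_mem_of_nonempty hp)]
      exact mesAux_insert_union hv L S

lemma card_mesSet_insert {v : ℕ} {τ : Finset ℕ} (L : List (Finset ℕ)) (hvτ : v ∉ τ)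
    (hvf : v ∉ f) (hmin : ∀ u ∈ insert v τ \ f, v ≤ u) :
    (mesSet (insert v τ) (f :: L)).card = (mesSet τ (linkList v (f :: L))).card + 1 := by
  have hvmem : v ∈ insert v τ \ f := by simp [hvf]
  have hnext : mesNext (insert v τ) f ∅ = v := by
    rw [mesNext_empty ⟨v, hvmem⟩]
    exact le_antisymm (Finset.min'_le _ _ hvmem) (Finset.le_min' _ _ _ hmin)
  have hT : insert v (mesAux (insert v τ) L (insert v ∅)).toFinset =
      insert v (mesAux τ (linkList v L) ∅).toFinset := by
    simpa only [Finset.union_insert, Finset.union_empty] using mesAux_insert_union hvτ L ∅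
  rw [mesSet, mesSet, mes, mes, linkList_cons_of_notMem hvf,
    mesAux_cons_of_not_subset fun h => hvf (h (Finset.mem_insert_self v τ)), hnext,
    List.toFinset_cons, hT,
    Finset.card_insert_of_notMem fun h => hvτ (mem_of_mem_mesAux (List.mem_toFinset.mp h))]

end MinimalExclusionSequence

namespace SComplex

variable {X : SComplex} {v w : ℕ} {σ τ ρ : Finset ℕ}

@[ext]
lemma ext {Y : SComplex} (h : X.faces = Y.faces) : X = Y := by
  cases X; cases Y; simpa using h

lemma subset_vertices (h : σ ∈ X.faces) : σ ⊆ X.vertices :=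
  fun _ hx => Finset.mem_sup.mpr ⟨σ, h, hx⟩

lemma exists_isMaximalFace_superset (h : σ ∈ X.faces) :
    ∃ ρ, X.IsMaximalFace ρ ∧ σ ⊆ ρ := by
  obtain ⟨ρ, hρ, hmax⟩ := Finset.exists_max_image (X.faces.filter (σ ⊆ ·)) Finset.card
    ⟨σ, Finset.mem_filter.mpr ⟨h, subset_rfl⟩⟩
  rw [Finset.mem_filter] at hρ
  refine ⟨ρ, ⟨hρ.1, fun τ hτ hρτ => ?_⟩, hρ.2⟩
  exact (Finset.eq_of_subset_of_card_le hρτ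
    (hmax τ (Finset.mem_filter.mpr ⟨hτ, hρ.2.trans hρτ⟩))).symm

lemma mem_link_iff : τ ∈ (X.link {v}).faces ↔ τ ∈ X.faces ∧ v ∉ τ ∧ insert v τ ∈ X.faces := by
  rw [link, Finset.mem_filter, ← Finset.disjoint_iff_inter_eq_empty,
    Finset.disjoint_singleton_left, Finset.insert_eq]

lemma mem_del_iff : τ ∈ (X.del {v}).faces ↔ τ ∈ X.faces ∧ v ∉ τ := by
  rw [del, Finset.mem_filter, Finset.singleton_subset_iff]

def IsApex (X : SComplex) (v : ℕ) : Prop :=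
  ∀ σ, X.IsMaximalFace σ → v ∈ σ

lemma link_eq_del_iff : X.link {v} = X.del {v} ↔ X.IsApex v := by
  constructor
  · intro h σ hσ
    by_contra hvσ
    have hσl : σ ∈ (X.link {v}).faces := h ▸ mem_del_iff.mpr ⟨hσ.1, hvσ⟩
    have := hσ.2 _ (mem_link_iff.mp hσl).2.2 (Finset.subset_insert v σ)
    exact hvσ (this ▸ Finset.mem_insert_self v σ)
  · intro h
    ext τ
    rw [mem_link_iff, mem_del_iff]
    refine ⟨fun hτ => ⟨hτ.1, hτ.2.1⟩, fun hτ => ⟨hτ.1, hτ.2, ?_⟩⟩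
    obtain ⟨σ, hσ, hτσ⟩ := exists_isMaximalFace_superset hτ.1
    exact X.down_closed hσ.1 (Finset.insert_subset (h σ hσ) hτσ)

lemma mem_coreVertices_iff : v ∈ X.coreVertices ↔ v ∈ X.vertices ∧ ¬ X.IsApex v := by
  rw [coreVertices, Finset.mem_filter, Ne, link_eq_del_iff]

lemma mem_vertices_iff : v ∈ X.vertices ↔ {v} ∈ X.faces :=
  ⟨singleton_mem_faces, fun h => subset_vertices h (Finset.mem_singleton_self v)⟩

lemma isMaximalFace_link_erase (hσ : X.IsMaximalFace σ) (hvσ : v ∈ σ) :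
    (X.link {v}).IsMaximalFace (σ.erase v) := by
  refine ⟨mem_link_iff.mpr ⟨X.down_closed hσ.1 (Finset.erase_subset _ _),
    Finset.notMem_erase _ _, by rw [Finset.insert_erase hvσ]; exact hσ.1⟩, fun τ hτ hστ => ?_⟩
  obtain ⟨-, hvτ, hτX⟩ := mem_link_iff.mp hτ
  have : insert v τ = σ := hσ.2 _ hτX (by
    simpa only [Finset.insert_erase hvσ] using Finset.insert_subset_insert v hστ)
  rw [← this, Finset.erase_insert hvτ]

lemma isMaximalFace_insert_of_link (hρ : (X.link {v}).IsMaximalFace ρ) :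
    X.IsMaximalFace (insert v ρ) := by
  obtain ⟨-, hvρ, hρX⟩ := mem_link_iff.mp hρ.1
  obtain ⟨σ, hσ, hρσ⟩ := exists_isMaximalFace_superset hρX
  have hvσ : v ∈ σ := hρσ (Finset.mem_insert_self v ρ)
  have : σ.erase v = ρ := hρ.2 _ (isMaximalFace_link_erase hσ hvσ).1
    (Finset.subset_erase.mpr ⟨(Finset.subset_insert v ρ).trans hρσ, hvρ⟩)
  rwa [← this, Finset.insert_erase hvσ]

namespace IsApex

lemma link (h : X.IsApex v) (hvw : v ≠ w) : (X.link {w}).IsApex v := fun _ hρ =>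
  (Finset.mem_insert.mp (h _ (isMaximalFace_insert_of_link hρ))).resolve_left hvw

lemma del (h : X.IsApex v) (hvw : v ≠ w) : (X.del {w}).IsApex v := by
  intro ρ hρ
  obtain ⟨hρX, hwρ⟩ := mem_del_iff.mp hρ.1
  obtain ⟨σ, hσ, hρσ⟩ := exists_isMaximalFace_superset hρX
  have : σ.erase w = ρ := hρ.2 _
    (mem_del_iff.mpr ⟨X.down_closed hσ.1 (Finset.erase_subset _ _), Finset.notMem_erase _ _⟩)
    (Finset.subset_erase.mpr ⟨hρσ, hwρ⟩)
  exact this ▸ Finset.mem_erase.mpr ⟨hvw, h σ hσ⟩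

lemma of_link (h : (X.link {w}).IsApex v) (hw : X.IsApex w) : X.IsApex v := fun σ hσ =>
  Finset.mem_of_mem_erase (h _ (isMaximalFace_link_erase hσ (hw σ hσ)))

lemma mem_vertices_link (hv : X.IsApex v) :
    w ∈ (X.link {v}).vertices ↔ w ∈ X.vertices ∧ w ≠ v := by
  rw [mem_vertices_iff, mem_vertices_iff, mem_link_iff, Finset.mem_singleton]
  refine ⟨fun h => ⟨h.1, fun hwv => h.2.1 hwv.symm⟩, fun h => ⟨h.1, fun hvw => h.2 hvw.symm, ?_⟩⟩
  obtain ⟨σ, hσ, hwσ⟩ := exists_isMaximalFace_superset h.1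
  exact X.down_closed hσ.1 (Finset.insert_subset (hv σ hσ) hwσ)

lemma coreVertices_link (hv : X.IsApex v) : (X.link {v}).coreVertices = X.coreVertices := by
  ext w
  rw [mem_coreVertices_iff, mem_coreVertices_iff, hv.mem_vertices_link]
  by_cases hwv : w = v
  · subst hwv
    simp [hv]
  · simp only [hwv, ne_eq, not_false_eq_true, and_true]
    exact and_congr_right fun _ => not_congr ⟨fun h => h.of_link hv, fun h => h.link hwv⟩

end IsApex

lemma link_link_comm (X : SComplex) (v w : ℕ) :
    (X.link {v}).link {w} = (X.link {w}).link {v} := by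
  ext τ
  simp only [mem_link_iff, Finset.mem_insert, not_or]
  rw [Finset.insert_comm v w]
  tauto

lemma link_del_comm (X : SComplex) (hvw : v ≠ w) :
    (X.del {w}).link {v} = (X.link {v}).del {w} := by
  ext τ
  simp only [mem_link_iff, mem_del_iff, Finset.mem_insert, not_or]
  tauto

lemma mnum_eq_zero (h : ¬ X.coreVertices.Nonempty) : Mnum X = 0 := by
  rw [Mnum, dif_neg h]

lemma mnum_le_max (hv : v ∈ X.coreVertices) :
    Mnum X ≤ max (Mnum (X.link {v}) + 1) (Mnum (X.del {v})) := by
  rw [Mnum, dif_pos ⟨v, hv⟩]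
  exact Finset.inf'_le _ (Finset.mem_attach _ ⟨v, hv⟩)

lemma exists_mnum_eq_max (h : X.coreVertices.Nonempty) :
    ∃ v ∈ X.coreVertices, Mnum X = max (Mnum (X.link {v}) + 1) (Mnum (X.del {v})) := by
  obtain ⟨v, -, hv⟩ := Finset.exists_mem_eq_inf' (Finset.attach_nonempty_iff.mpr h)
    fun v : X.coreVertices => max (Mnum (X.link {v.1}) + 1) (Mnum (X.del {v.1}))
  exact ⟨v.1, v.2, by rw [Mnum, dif_pos h, hv]⟩

/-- Both branches at a vertex `w` of `lk(v, X)` are the links at `v` of the corresponding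
branches of `X`, so an optimal choice for the link is an admissible one for `X`. -/
theorem mnum_le_mnum_link_of_isApex {X : SComplex} {v : ℕ} (hv : X.IsApex v) :
    Mnum X ≤ Mnum (X.link {v}) := by
  by_cases hc : X.coreVertices.Nonempty
  swap
  · simp [mnum_eq_zero hc]
  rw [← hv.coreVertices_link] at hc
  obtain ⟨w, hw, heq⟩ := exists_mnum_eq_max hc
  rw [hv.coreVertices_link] at hw
  have hwv : w ≠ v := fun h => (mem_coreVertices_iff.mp hw).2 (h ▸ hv)
  have hwX : {w} ∈ X.faces := singleton_mem_faces (mem_coreVertices_iff.mp hw).1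
  calc Mnum X ≤ max (Mnum (X.link {w}) + 1) (Mnum (X.del {w})) := mnum_le_max hw
    _ ≤ max (Mnum ((X.link {w}).link {v}) + 1) (Mnum ((X.del {w}).link {v})) :=
        max_le_max (Nat.add_le_add_right (mnum_le_mnum_link_of_isApex (hv.link hwv.symm)) 1)
          (mnum_le_mnum_link_of_isApex (hv.del hwv.symm))
    _ = Mnum (X.link {v}) := by rw [link_link_comm, link_del_comm X hwv.symm, heq]
termination_by X.faces.card
decreasing_by
  · exact link_faces_card_lt hwX (Finset.singleton_nonempty w)
  · exact del_faces_card_lt hwX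

lemma vertices_sdiff_nonempty {f : Finset ℕ} (hc : X.coreVertices.Nonempty) (hf : f ∈ X.faces) :
    (X.vertices \ f).Nonempty := by
  obtain ⟨w, hw⟩ := hc
  obtain ⟨hwX, hw⟩ := mem_coreVertices_iff.mp hw
  obtain ⟨σ, hσ, hwσ⟩ : ∃ σ, X.IsMaximalFace σ ∧ w ∉ σ := by simpa [IsApex] using hw
  rw [Finset.sdiff_nonempty]
  intro hXf
  have : f = σ := hσ.2 f hf ((subset_vertices hσ.1).trans hXf)
  exact hwσ (this ▸ hXf hwX)

structure IsGeneratedBy (X : SComplex) (L : List (Finset ℕ)) : Prop where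
  mem_faces : ∀ f ∈ L, f ∈ X.faces
  exists_superset : ∀ σ ∈ X.faces, ∃ f ∈ L, σ ⊆ f

namespace IsGeneratedBy

variable {L : List (Finset ℕ)}

lemma link (hL : X.IsGeneratedBy L) : (X.link {v}).IsGeneratedBy (linkList v L) where
  mem_faces g hg := by
    obtain ⟨f, hf, rfl⟩ := List.mem_map.mp hg
    have hvf : v ∈ f := by simpa using (List.mem_filter.mp hf).2
    have hfX := hL.mem_faces f (List.mem_filter.mp hf).1
    exact mem_link_iff.mpr ⟨X.down_closed hfX (Finset.erase_subset v f), Finset.notMem_erase v f,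
      by rwa [Finset.insert_erase hvf]⟩
  exists_superset τ hτ := by
    obtain ⟨-, hvτ, hτX⟩ := mem_link_iff.mp hτ
    obtain ⟨f, hf, hτf⟩ := hL.exists_superset _ hτX
    have hvf : v ∈ f := hτf (Finset.mem_insert_self v τ)
    exact ⟨f.erase v, List.mem_map.mpr ⟨f, List.mem_filter.mpr ⟨hf, by simpa using hvf⟩, rfl⟩,
      Finset.subset_erase.mpr ⟨(Finset.subset_insert v τ).trans hτf, hvτ⟩⟩

lemma del (hL : X.IsGeneratedBy L) : (X.del {v}).IsGeneratedBy (L.map (·.erase v)) where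
  mem_faces g hg := by
    obtain ⟨f, hf, rfl⟩ := List.mem_map.mp hg
    exact mem_del_iff.mpr ⟨X.down_closed (hL.mem_faces f hf) (Finset.erase_subset v f),
      Finset.notMem_erase v f⟩
  exists_superset σ hσ := by
    obtain ⟨hσX, hvσ⟩ := mem_del_iff.mp hσ
    obtain ⟨f, hf, hσf⟩ := hL.exists_superset σ hσX
    exact ⟨f.erase v, List.mem_map_of_mem hf, Finset.subset_erase.mpr ⟨hσf, hvσ⟩⟩

end IsGeneratedBy

lemma dOrder_del_le (X : SComplex) (v : ℕ) (L : List (Finset ℕ)) :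
    dOrder (X.del {v}) (L.map (·.erase v)) ≤ dOrder X L := by
  refine Finset.sup_le fun σ hσ => ?_
  obtain ⟨hσX, hvσ⟩ := mem_del_iff.mp hσ
  rw [mesSet_map_erase hvσ]
  exact Finset.le_sup (f := fun σ => (mesSet σ L).card) hσX

lemma dOrder_link_add_one_le {f : Finset ℕ} (hv : IsLeast ↑(X.vertices \ f) v)
    (L : List (Finset ℕ)) : dOrder (X.link {v}) (linkList v (f :: L)) + 1 ≤ dOrder X (f :: L) := by
  obtain ⟨hvX, hvf⟩ := Finset.mem_sdiff.mp hv.1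
  have hbound : ∀ τ ∈ (X.link {v}).faces,
      (mesSet τ (linkList v (f :: L))).card + 1 ≤ dOrder X (f :: L) := by
    intro τ hτ
    obtain ⟨-, hvτ, hτX⟩ := mem_link_iff.mp hτ
    have hmin : ∀ u ∈ insert v τ \ f, v ≤ u := fun u hu =>
      hv.2 (Finset.mem_sdiff.mpr ⟨subset_vertices hτX (Finset.mem_sdiff.mp hu).1,
        (Finset.mem_sdiff.mp hu).2⟩)
    rw [← card_mesSet_insert L hvτ hvf hmin]
    exact Finset.le_sup (f := fun σ => (mesSet σ (f :: L)).card) hτX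
  have hempty : ∅ ∈ (X.link {v}).faces := mem_link_iff.mpr
    ⟨X.down_closed (singleton_mem_faces hvX) (Finset.empty_subset _), Finset.notMem_empty v,
      by simpa using singleton_mem_faces hvX⟩
  obtain ⟨τ, hτ, hsup⟩ := Finset.exists_mem_eq_sup _ ⟨∅, hempty⟩
    fun τ => (mesSet τ (linkList v (f :: L))).card
  rw [dOrder, hsup]
  exact hbound τ hτ

theorem mnum_le_dOrder_of_isGeneratedBy {X : SComplex} {L : List (Finset ℕ)}
    (hL : X.IsGeneratedBy L) : Mnum X ≤ dOrder X L := by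
  by_cases hc : X.coreVertices.Nonempty
  swap
  · simp [mnum_eq_zero hc]
  obtain ⟨f, L, rfl⟩ : ∃ f L', L = f :: L' := by
    obtain ⟨w, hw⟩ := hc
    obtain ⟨f, hf, -⟩ :=
      hL.exists_superset {w} (singleton_mem_faces (mem_coreVertices_iff.mp hw).1)
    exact List.exists_cons_of_ne_nil (List.ne_nil_of_mem hf)
  have hne := vertices_sdiff_nonempty hc (hL.mem_faces f List.mem_cons_self)
  set v := (X.vertices \ f).min' hne
  have hv : IsLeast ↑(X.vertices \ f) v := Finset.isLeast_min' _ hne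
  have hvX : {v} ∈ X.faces := singleton_mem_faces (Finset.mem_sdiff.mp hv.1).1
  have hlink : Mnum (X.link {v}) + 1 ≤ dOrder X (f :: L) :=
    (Nat.add_le_add_right (mnum_le_dOrder_of_isGeneratedBy hL.link) 1).trans
      (dOrder_link_add_one_le hv L)
  by_cases hvc : v ∈ X.coreVertices
  · calc Mnum X ≤ max (Mnum (X.link {v}) + 1) (Mnum (X.del {v})) := mnum_le_max hvc
      _ ≤ dOrder X (f :: L) := max_le hlink
          ((mnum_le_dOrder_of_isGeneratedBy hL.del).trans (dOrder_del_le X v _))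
  · have hapex : X.IsApex v := by
      simpa [mem_coreVertices_iff, Finset.mem_sdiff.mp hv.1] using hvc
    calc Mnum X ≤ Mnum (X.link {v}) := mnum_le_mnum_link_of_isApex hapex
      _ ≤ dOrder X (f :: L) := by omega
termination_by X.faces.card
decreasing_by
  · exact link_faces_card_lt hvX (Finset.singleton_nonempty v)
  · exact del_faces_card_lt hvX

end SComplex

lemma IsFacetOrder.isGeneratedBy {X : SComplex} {L : List (Finset ℕ)} (hL : IsFacetOrder X L) :
    X.IsGeneratedBy L where
  mem_faces f hf := ((hL.2 f).mp hf).1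
  exists_superset σ hσ := by
    obtain ⟨ρ, hρ, hσρ⟩ := SComplex.exists_isMaximalFace_superset hσ
    exact ⟨ρ, (hL.2 ρ).mpr hρ, hσρ⟩

/-- For a finite abstract simplicial complex `X` and any
linear ordering `≺` (given by the list `L`) of its maximal faces,
`M_0(X) ≤ d(X, ≺)`. -/
theorem Mnum_le_dOrder (X : SComplex) (L : List (Finset ℕ))
    (hL : IsFacetOrder X L) :
    SComplex.Mnum X ≤ dOrder X L :=
  SComplex.mnum_le_dOrder_of_isGeneratedBy hL.isGeneratedBy
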